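/- In the setting of Problem 2, let 𝒦 = ℋ ⊕ 𝒢_1 ⊕ ⋯ ⊕ 𝒢_m, let A : 𝒦 → 2^𝒦 be defined by A(x, v_1,…,v_m) = ( ∂f(x) − z + Σ_{i=1}^m L_i^* v_i ) × ∏_{i=1}^m ( −L_i x + ∂g_i^*(v_i) + r_i ), and let B : 𝒦 → 𝒦 be defined by B(x, v_1,…,v_m) = ( ∇h(x), ∇ℓ_1^*(v_1), …, ∇ℓ_m^*(v_m) ). If (x̄, v̄_1,…,v̄_m) ∈ zer(A+B), i.e. 0 ∈ A(x̄, v̄_1,…,v̄_m) + B(x̄, v̄_1,…,v̄_m), then x̄ is а solution of the primal problem: minimize over x ∈ ℋ the quantity f(x) + Σ_{i=1}^m (g_i □ ℓ_i)(L_i x − r_i) + h(x) − ⟨x,z⟩, and (v̄_1,…,v̄_m) is a solution of the dual problem: minimize over (v_1,…,v_m) ∈ 𝒢_1 × ⋯ × 𝒢_m the quantity (f^* □ h^*)( z − Σ_{i=1}^m L_i^* v_i ) + Σ_{i=1}^m ( g_i^*(v_i) + ℓ_i^*(v_i) + ⟨v_i, r_i⟩ ). -/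

import Mathlib

/-!
The zero of `A + B` says that `u₀ = z - ∇h(x̄) - Σᵢ Lᵢ* v̄ᵢ ∈ ∂f(x̄)` and
`qᵢ = Lᵢ x̄ - rᵢ - ∇ℓᵢ*(v̄ᵢ) ∈ ∂gᵢ*(v̄ᵢ)`. For `φ ∈ Γ₀` the Fenchel–Moreau inequality `φ ≤ φ**`
(obtained by separating points from the epigraph) inverts `q ∈ ∂φ*(v)` into `v ∈ ∂φ(q)`; hence
`v̄ᵢ ∈ ∂gᵢ(qᵢ) ∩ ∂ℓᵢ(∇ℓᵢ*(v̄ᵢ)) ⊆ ∂(gᵢ □ ℓᵢ)(Lᵢ x̄ - rᵢ)`. Dually, `x̄ ∈ ∂f*(u₀) ∩ ∂h*(∇h(x̄))`,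
so `x̄ ∈ ∂(f* □ h*)(z - Σᵢ Lᵢ* v̄ᵢ)`, and `Lᵢ x̄ ∈ ∂(gᵢ* + ℓᵢ* + ⟨·, rᵢ⟩)(v̄ᵢ)`. In each problem
the subgradient inequalities of the summands add up to optimality, because their linear terms
cancel: the subgradients are paired through `Lᵢ` and its adjoint.
-/

open scoped RealInnerProductSpace

noncomputable section

variable {E : Type*} [NormedAddCommGroup E] [InnerProductSpace ℝ E]

/-- The class Γ₀ : proper, lower semicontinuous, convex functions with values in ]-∞,+∞]. -/
def Gamma0 (f : E → EReal) : Prop :=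
  (∃ x, f x ≠ ⊤) ∧ (∀ x, f x ≠ ⊥) ∧ LowerSemicontinuous f ∧
    ∀ x y : E, ∀ t : ℝ, 0 ≤ t → t ≤ 1 →
      f (t • x + (1 - t) • y) ≤ (t : EReal) * f x + ((1 - t : ℝ) : EReal) * f y

/-- Strong convexity (with some modulus σ > 0) for `EReal`-valued functions. -/
def StronglyConvexE (f : E → EReal) : Prop :=
  ∃ σ : ℝ, 0 < σ ∧ ∀ x y : E, ∀ t : ℝ, 0 ≤ t → t ≤ 1 →
    f (t • x + (1 - t) • y) + ((σ / 2 * t * (1 - t) * ‖x - y‖ ^ 2 : ℝ) : EReal)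
      ≤ (t : EReal) * f x + ((1 - t : ℝ) : EReal) * f y

/-- The subdifferential of `f` at `x`. -/
def subdiff (f : E → EReal) (x : E) : Set E :=
  {u | ∀ y, ((⟪y - x, u⟫ : ℝ) : EReal) + f x ≤ f y}

/-- The Fenchel conjugate of `f`. -/
def conj (f : E → EReal) (u : E) : EReal := ⨆ x, ((⟪x, u⟫ : ℝ) : EReal) - f x

/-- The infimal convolution of `f` and `g`. -/
def infConv (f g : E → EReal) (x : E) : EReal := ⨅ y, f y + g (x - y)

namespace EReal

theorem coe_finset_sum {ι : Type*} (s : Finset ι) (a : ι → ℝ) :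
    ((∑ i ∈ s, a i : ℝ) : EReal) = ∑ i ∈ s, (a i : EReal) :=
  map_sum (⟨⟨(↑), coe_zero⟩, coe_add⟩ : ℝ →+ EReal) a s

theorem coe_sub_le_coe_iff {a b : ℝ} {y : EReal} :
    (a : EReal) - y ≤ b ↔ ((a - b : ℝ) : EReal) ≤ y := by
  induction y using EReal.rec with
  | bot => simp [-coe_sub]
  | coe y => norm_cast; constructor <;> intro h <;> linarith
  | top => simp [sub_top]

theorem add_sum_le_add_sum_of_coe_add_le {ι : Type*} (s : Finset ι) {a : ℝ} {b : ι → ℝ}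
    {x₀ x : EReal} {y₀ y : ι → EReal} (hx : (a : EReal) + x₀ ≤ x)
    (hy : ∀ i ∈ s, (b i : EReal) + y₀ i ≤ y i) (hab : a + ∑ i ∈ s, b i = 0) :
    x₀ + ∑ i ∈ s, y₀ i ≤ x + ∑ i ∈ s, y i :=
  calc x₀ + ∑ i ∈ s, y₀ i = ((a + ∑ i ∈ s, b i : ℝ) : EReal) + (x₀ + ∑ i ∈ s, y₀ i) := by
        rw [hab, coe_zero, zero_add]
    _ = ((a : EReal) + x₀) + ∑ i ∈ s, ((b i : EReal) + y₀ i) := by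
        rw [coe_add, coe_finset_sum, Finset.sum_add_distrib, add_add_add_comm]
    _ ≤ x + ∑ i ∈ s, y i := add_le_add hx (Finset.sum_le_sum hy)

end EReal

theorem inner_sub_le_conj (f : E → EReal) (x v : E) : ((⟪x, v⟫ : ℝ) : EReal) - f x ≤ conj f v :=
  le_iSup (fun y => ((⟪y, v⟫ : ℝ) : EReal) - f y) x

theorem conj_le_coe_iff {f : E → EReal} {v : E} {b : ℝ} :
    conj f v ≤ b ↔ ∀ x, ((⟪x, v⟫ - b : ℝ) : EReal) ≤ f x := by
  simp only [conj, iSup_le_iff, EReal.coe_sub_le_coe_iff]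

theorem conj_eq_of_mem_subdiff {f : E → EReal} {x u : E} {a : ℝ} (hu : u ∈ subdiff f x)
    (hx : f x = a) : conj f u = ((⟪x, u⟫ - a : ℝ) : EReal) := by
  refine le_antisymm (conj_le_coe_iff.2 fun y => ?_) ?_
  · calc ((⟪y, u⟫ - (⟪x, u⟫ - a) : ℝ) : EReal) = ((⟪y - x, u⟫ : ℝ) : EReal) + f x := by
          rw [hx, ← EReal.coe_add, inner_sub_left]; ring_nf
      _ ≤ f y := hu y
  · simpa [hx] using inner_sub_le_conj f x u

theorem exists_coe_eq_of_mem_subdiff {f : E → EReal} {x u : E} (hf : ∃ y, f y ≠ ⊤)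
    (hx : f x ≠ ⊥) (hu : u ∈ subdiff f x) : ∃ a : ℝ, f x = a := by
  have hx' : f x ≠ ⊤ := by
    intro htop
    obtain ⟨y, hy⟩ := hf
    have := hu y
    rw [htop, EReal.coe_add_top, top_le_iff] at this
    exact hy this
  exact ⟨(f x).toReal, (EReal.coe_toReal hx' hx).symm⟩

theorem mem_subdiff_conj_of_mem_subdiff {f : E → EReal} {x u : E} {a : ℝ}
    (hu : u ∈ subdiff f x) (hx : f x = a) : x ∈ subdiff (conj f) u := by
  intro w
  calc ((⟪w - u, x⟫ : ℝ) : EReal) + conj f u = ((⟪x, w⟫ : ℝ) : EReal) - f x := by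
        rw [conj_eq_of_mem_subdiff hu hx, hx, ← EReal.coe_add, ← EReal.coe_sub, inner_sub_left,
          real_inner_comm w, real_inner_comm u]
        ring_nf
    _ ≤ conj f w := inner_sub_le_conj f x w

theorem mem_subdiff_infConv {f g : E → EReal} {a b v : E} (hf : v ∈ subdiff f a)
    (hg : v ∈ subdiff g b) : v ∈ subdiff (infConv f g) (a + b) := by
  intro y
  have hab : infConv f g (a + b) ≤ f a + g b := by
    simpa [infConv] using iInf_le (fun c => f c + g (a + b - c)) a
  refine le_iInf fun c => ?_
  calc ((⟪y - (a + b), v⟫ : ℝ) : EReal) + infConv f g (a + b)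
      ≤ ((⟪c - a, v⟫ : ℝ) : EReal) + ((⟪y - c - b, v⟫ : ℝ) : EReal) + (f a + g b) := by
        rw [← EReal.coe_add, ← inner_add_left, show c - a + (y - c - b) = y - (a + b) by abel]
        exact add_le_add_right hab _
    _ = (((⟪c - a, v⟫ : ℝ) : EReal) + f a) + (((⟪y - c - b, v⟫ : ℝ) : EReal) + g b) :=
        add_add_add_comm _ _ _ _
    _ ≤ f c + g (y - c) := add_le_add (hf c) (hg (y - c))

theorem add_mem_subdiff_add {f g : E → EReal} {x u v : E} (hu : u ∈ subdiff f x)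
    (hv : v ∈ subdiff g x) : u + v ∈ subdiff (f + g) x := fun y =>
  calc ((⟪y - x, u + v⟫ : ℝ) : EReal) + (f + g) x
      = (((⟪y - x, u⟫ : ℝ) : EReal) + f x) + (((⟪y - x, v⟫ : ℝ) : EReal) + g x) := by
        rw [inner_add_right, EReal.coe_add, Pi.add_apply, add_add_add_comm]
    _ ≤ (f + g) y := add_le_add (hu y) (hv y)

theorem mem_subdiff_inner (x v : E) : v ∈ subdiff (fun y => ((⟪y, v⟫ : ℝ) : EReal)) x := fun y => by
  rw [← EReal.coe_add, inner_sub_left, sub_add_cancel]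

theorem convexOn_of_coe_eq_conj {f : E → EReal} {φ : E → ℝ} (hφ : ∀ v, (φ v : EReal) = conj f v) :
    ConvexOn ℝ Set.univ φ := by
  refine ⟨convex_univ, fun v _ w _ a b ha hb hab => ?_⟩
  rw [← EReal.coe_le_coe_iff, hφ, smul_eq_mul, smul_eq_mul]
  refine conj_le_coe_iff.2 fun y => ?_
  have hv := conj_le_coe_iff.1 (hφ v).ge y
  have hw := conj_le_coe_iff.1 (hφ w).ge y
  calc ((⟪y, a • v + b • w⟫ - (a * φ v + b * φ w) : ℝ) : EReal)
      = ((a • (⟪y, v⟫ - φ v) + b • (⟪y, w⟫ - φ w) : ℝ) : EReal) := by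
        rw [inner_add_right, real_inner_smul_right, real_inner_smul_right, smul_eq_mul,
          smul_eq_mul]
        ring_nf
    _ ≤ ((max (⟪y, v⟫ - φ v) (⟪y, w⟫ - φ w) : ℝ) : EReal) :=
        EReal.coe_le_coe_iff.2 (Convex.combo_le_max _ _ ha hb hab)
    _ ≤ f y := by
        rw [EReal.coe_strictMono.monotone.map_max]
        exact max_le hv hw

theorem LowerSemicontinuous.isClosed_setOf_le_coe {X : Type*} [TopologicalSpace X] {f : X → EReal}
    (hf : LowerSemicontinuous f) : IsClosed {p : X × ℝ | f p.1 ≤ p.2} :=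
  hf.isClosed_epigraph.preimage (continuous_id.prodMap continuous_coe_real_ereal)

theorem exists_affine_le_of_separation {f : E → EReal} {x v : E} {c s u : ℝ} (hs : s < 0)
    (hsep : ∀ y (t : ℝ), f y ≤ t → ⟪y, v⟫ + t * s ≤ u) (hx : u < ⟪x, v⟫ + c * s) :
    ∃ w b, (∀ y, ((⟪y, w⟫ - b : ℝ) : EReal) ≤ f y) ∧ c < ⟪x, w⟫ - b := by
  refine ⟨(-s)⁻¹ • v, (-s)⁻¹ * u, fun y => ?_, ?_⟩
  · refine EReal.le_of_forall_lt_iff_le.1 fun t ht => ?_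
    have := hsep y t ht.le
    rw [EReal.coe_le_coe_iff, real_inner_smul_right, ← mul_sub, inv_mul_le_iff₀ (neg_pos.2 hs)]
    linarith
  · rw [real_inner_smul_right, ← mul_sub, lt_inv_mul_iff₀ (neg_pos.2 hs)]
    linarith

namespace Gamma0

variable {f : E → EReal}

theorem exists_coe (hf : Gamma0 f) : ∃ x, ∃ a : ℝ, f x = a := by
  obtain ⟨x, hx⟩ := hf.1
  exact ⟨x, (f x).toReal, (EReal.coe_toReal hx (hf.2.1 x)).symm⟩

theorem convex_setOf_le_coe (hf : Gamma0 f) : Convex ℝ {p : E × ℝ | f p.1 ≤ p.2} := by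
  rintro ⟨x, s⟩ hx ⟨y, t⟩ hy a b ha hb hab
  obtain rfl : b = 1 - a := by linarith
  show f (a • x + (1 - a) • y) ≤ ((a * s + (1 - a) * t : ℝ) : EReal)
  calc f (a • x + (1 - a) • y) ≤ (a : EReal) * f x + ((1 - a : ℝ) : EReal) * f y :=
        hf.2.2.2 x y a ha (by linarith)
    _ ≤ (a : EReal) * s + ((1 - a : ℝ) : EReal) * t :=
        add_le_add (mul_le_mul_of_nonneg_left hx (EReal.coe_nonneg.2 ha))
          (mul_le_mul_of_nonneg_left hy (EReal.coe_nonneg.2 hb))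
    _ = ((a * s + (1 - a) * t : ℝ) : EReal) := by norm_cast

theorem conj_ne_bot (hf : Gamma0 f) (v : E) : conj f v ≠ ⊥ := by
  obtain ⟨x, a, ha⟩ := hf.exists_coe
  refine ne_bot_of_le_ne_bot ?_ (inner_sub_le_conj f x v)
  rw [ha, ← EReal.coe_sub]
  exact EReal.coe_ne_bot _

theorem separation_slope_nonpos (hf : Gamma0 f) {v : E} {s u : ℝ}
    (hsep : ∀ y (t : ℝ), f y ≤ t → ⟪y, v⟫ + t * s < u) : s ≤ 0 := by
  by_contra! hs
  obtain ⟨y₀, a, ha⟩ := hf.exists_coe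
  have hy₀ := hsep y₀ (max a ((u - ⟪y₀, v⟫) / s)) (ha ▸ EReal.coe_le_coe_iff.2 (le_max_left _ _))
  have := (div_le_iff₀ hs).1 (le_max_right a ((u - ⟪y₀, v⟫) / s))
  linarith

variable [CompleteSpace E]

theorem exists_separation (hf : Gamma0 f) {x : E} {c : ℝ} (hc : (c : EReal) < f x) :
    ∃ (v : E) (s u : ℝ), (∀ y (t : ℝ), f y ≤ t → ⟪y, v⟫ + t * s < u) ∧ u < ⟪x, v⟫ + c * s := by
  obtain ⟨φ, u, hepi, hxc⟩ := geometric_hahn_banach_closed_point hf.convex_setOf_le_coe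
    hf.2.2.1.isClosed_setOf_le_coe
    (show (x, c) ∉ {p : E × ℝ | f p.1 ≤ p.2} from not_le.2 hc)
  set v := (InnerProductSpace.toDual ℝ E).symm (φ.comp (ContinuousLinearMap.inl ℝ E ℝ))
  have hφ : ∀ y t, φ (y, t) = ⟪y, v⟫ + t * φ (0, 1) := by
    intro y t
    rw [real_inner_comm, InnerProductSpace.toDual_symm_apply, ← smul_eq_mul, ← map_smul,
      ContinuousLinearMap.comp_apply, ContinuousLinearMap.inl_apply, ← map_add]
    simp
  exact ⟨v, φ (0, 1), u, fun y t hyt => hφ y t ▸ hepi (y, t) hyt, hφ x c ▸ hxc⟩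

theorem exists_affine_le (hf : Gamma0 f) : ∃ w b, ∀ y, ((⟪y, w⟫ - b : ℝ) : EReal) ≤ f y := by
  obtain ⟨y₀, a, ha⟩ := hf.exists_coe
  obtain ⟨v, s, u, hsep, hy₀⟩ :=
    hf.exists_separation (x := y₀) (c := a - 1) (by rw [ha]; exact_mod_cast sub_one_lt a)
  have hs : s < 0 := by
    have := hsep y₀ a ha.le
    linarith
  obtain ⟨w, b, hwb, -⟩ := exists_affine_le_of_separation hs (fun y t h => (hsep y t h).le) hy₀
  exact ⟨w, b, hwb⟩

theorem exists_affine_le_of_lt (hf : Gamma0 f) {x : E} {c : ℝ} (hc : (c : EReal) < f x) :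
    ∃ w b, (∀ y, ((⟪y, w⟫ - b : ℝ) : EReal) ≤ f y) ∧ c < ⟪x, w⟫ - b := by
  obtain ⟨v, s, u, hsep, hx⟩ := hf.exists_separation hc
  have hs := hf.separation_slope_nonpos hsep
  obtain ⟨w₀, b₀, hw₀⟩ := hf.exists_affine_le
  -- Adding a large multiple `k` of the separating functional to the affine minorant gives a
  -- non-vertical hyperplane that still separates `(x, c)` from the epigraph, also when the
  -- separating one is vertical (`s = 0`, i.e. `x ∉ dom f`).
  set δ := ⟪x, v⟫ + c * s - u
  have hδ : 0 < δ := by linarith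
  set K := c - ⟪x, w₀⟫ + b₀
  set k := |K| / δ + 1
  have hk : 0 < k := by positivity
  have hkδ : k * δ = |K| + δ := by simp only [k]; field_simp
  refine exists_affine_le_of_separation (v := k • v + w₀) (s := k * s - 1) (u := k * u + b₀)
    (by nlinarith) (fun y t hyt => ?_) ?_
  · have h₁ := mul_le_mul_of_nonneg_left (hsep y t hyt).le hk.le
    have h₂ : ⟪y, w₀⟫ - b₀ ≤ t := EReal.coe_le_coe_iff.1 ((hw₀ y).trans hyt)
    rw [inner_add_right, real_inner_smul_right]
    linarith
  · rw [inner_add_right, real_inner_smul_right]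
    linarith [le_abs_self K]

theorem le_conj_conj (hf : Gamma0 f) (x : E) : f x ≤ conj (conj f) x := by
  refine EReal.ge_of_forall_gt_iff_ge.1 fun c hc => ?_
  obtain ⟨w, b, hwb, hcx⟩ := hf.exists_affine_le_of_lt hc
  calc (c : EReal) ≤ ((⟪w, x⟫ - b : ℝ) : EReal) :=
        EReal.coe_le_coe_iff.2 (by rw [real_inner_comm]; exact hcx.le)
    _ ≤ ((⟪w, x⟫ : ℝ) : EReal) - conj f w := by
        rw [EReal.coe_sub]; exact EReal.sub_le_sub le_rfl (conj_le_coe_iff.2 hwb)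
    _ ≤ conj (conj f) x := inner_sub_le_conj (conj f) w x

theorem exists_conj_ne_top (hf : Gamma0 f) : ∃ v, conj f v ≠ ⊤ := by
  obtain ⟨w, b, hwb⟩ := hf.exists_affine_le
  exact ⟨w, ne_top_of_le_ne_top (EReal.coe_ne_top b) (conj_le_coe_iff.2 hwb)⟩

theorem mem_subdiff_of_mem_subdiff_conj (hf : Gamma0 f) {v q : E}
    (hq : q ∈ subdiff (conj f) v) : v ∈ subdiff f q := by
  obtain ⟨c, hc⟩ := exists_coe_eq_of_mem_subdiff hf.exists_conj_ne_top (hf.conj_ne_bot v) hq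
  have hfq : f q ≤ ((⟪v, q⟫ - c : ℝ) : EReal) :=
    (hf.le_conj_conj q).trans (conj_eq_of_mem_subdiff hq hc).le
  intro y
  calc ((⟪y - q, v⟫ : ℝ) : EReal) + f q ≤ ((⟪y - q, v⟫ : ℝ) : EReal) + ((⟪v, q⟫ - c : ℝ) : EReal) :=
        add_le_add_right hfq _
    _ = ((⟪y, v⟫ - c : ℝ) : EReal) := by
        rw [← EReal.coe_add, inner_sub_left, real_inner_comm q]; ring_nf
    _ ≤ f y := conj_le_coe_iff.1 hc.le y

end Gamma0

section

variable [CompleteSpace E]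

theorem ConvexOn.add_inner_le_of_hasGradientAt {φ : E → ℝ} (hφ : ConvexOn ℝ Set.univ φ) {x g : E}
    (hg : HasGradientAt φ g x) (y : E) : φ x + ⟪y - x, g⟫ ≤ φ y := by
  let γ : ℝ →ᵃ[ℝ] E := AffineMap.lineMap x y
  have hline : ConvexOn ℝ Set.univ (φ ∘ γ) := hφ.comp_affineMap γ
  have hderiv : HasDerivAt (φ ∘ γ) ⟪y - x, g⟫ 0 := by
    have hγ : HasDerivAt γ (y - x) 0 := AffineMap.hasDerivAt_lineMap
    have := (show γ 0 = x by simp [γ]) ▸ hg.hasFDerivAt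
    simpa [real_inner_comm] using this.comp_hasDerivAt (0 : ℝ) hγ
  have := hline.le_slope_of_hasDerivAt (Set.mem_univ 0) (Set.mem_univ 1) one_pos hderiv
  simp only [slope_def_field, Function.comp_apply, sub_zero, div_one] at this
  simp only [γ, AffineMap.lineMap_apply_zero, AffineMap.lineMap_apply_one] at this
  linarith

theorem ConvexOn.mem_subdiff_of_hasGradientAt {φ : E → ℝ} (hφ : ConvexOn ℝ Set.univ φ) {x g : E}
    (hg : HasGradientAt φ g x) : g ∈ subdiff (fun y => (φ y : EReal)) x := fun y => by
  rw [← EReal.coe_add, EReal.coe_le_coe_iff, add_comm]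
  exact hφ.add_inner_le_of_hasGradientAt hg y

theorem primal_le_of_mem_subdiff {ι : Type*} [Fintype ι] {G : ι → Type*}
    [∀ i, NormedAddCommGroup (G i)] [∀ i, InnerProductSpace ℝ (G i)] [∀ i, CompleteSpace (G i)]
    {f : E → EReal} {φ : ∀ i, G i → EReal} {ρ : E → ℝ} {L : ∀ i, E →L[ℝ] G i} {r : ∀ i, G i}
    {z x₀ u w : E} {v₀ : ∀ i, G i} (hu : u ∈ subdiff f x₀)
    (hw : w ∈ subdiff (fun x => (ρ x : EReal)) x₀)
    (hv : ∀ i, v₀ i ∈ subdiff (φ i) (L i x₀ - r i))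
    (hz : u + ∑ i, ContinuousLinearMap.adjoint (L i) (v₀ i) + w = z) (x : E) :
    f x₀ + ∑ i, φ i (L i x₀ - r i) + ((ρ x₀ - ⟪x₀, z⟫ : ℝ) : EReal)
      ≤ f x + ∑ i, φ i (L i x - r i) + ((ρ x - ⟪x, z⟫ : ℝ) : EReal) := by
  rw [add_right_comm, add_right_comm (f x)]
  refine EReal.add_sum_le_add_sum_of_coe_add_le _ (a := ⟪x - x₀, u + (w - z)⟫) ?_
    (fun i _ => hv i (L i x - r i)) ?_
  · have hρ := hw x
    rw [← EReal.coe_add, EReal.coe_le_coe_iff] at hρ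
    rw [inner_add_right, EReal.coe_add, add_add_add_comm]
    refine add_le_add (hu x) ?_
    rw [← EReal.coe_add, EReal.coe_le_coe_iff]
    simp only [inner_sub_left, inner_sub_right] at hρ ⊢
    linarith
  · rw [show u + (w - z) = -∑ i, ContinuousLinearMap.adjoint (L i) (v₀ i) by rw [← hz]; abel,
      inner_neg_right, inner_sum, neg_add_eq_zero]
    refine Finset.sum_congr rfl fun i _ => ?_
    rw [ContinuousLinearMap.adjoint_inner_right, map_sub, sub_sub_sub_cancel_right]

theorem dual_le_of_mem_subdiff {ι : Type*} [Fintype ι] {G : ι → Type*}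
    [∀ i, NormedAddCommGroup (G i)] [∀ i, InnerProductSpace ℝ (G i)] [∀ i, CompleteSpace (G i)]
    {ψ : E → EReal} {φ : ∀ i, G i → EReal} {L : ∀ i, E →L[ℝ] G i} {z x₀ : E} {v₀ : ∀ i, G i}
    (hψ : x₀ ∈ subdiff ψ (z - ∑ i, ContinuousLinearMap.adjoint (L i) (v₀ i)))
    (hφ : ∀ i, L i x₀ ∈ subdiff (φ i) (v₀ i)) (v : ∀ i, G i) :
    ψ (z - ∑ i, ContinuousLinearMap.adjoint (L i) (v₀ i)) + ∑ i, φ i (v₀ i)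
      ≤ ψ (z - ∑ i, ContinuousLinearMap.adjoint (L i) (v i)) + ∑ i, φ i (v i) := by
  refine EReal.add_sum_le_add_sum_of_coe_add_le _ (hψ _) (fun i _ => hφ i (v i)) ?_
  rw [sub_sub_sub_cancel_left, ← Finset.sum_sub_distrib, sum_inner, ← Finset.sum_add_distrib]
  refine Finset.sum_eq_zero fun i _ => ?_
  rw [← map_sub, ContinuousLinearMap.adjoint_inner_left, ← inner_add_left]
  simp

end

/-- `hh` is the function `h`, `h'` its gradient, `lstar i` the (real-valued) conjugate `ℓᵢ*`,
and `lgrad i` its gradient. -/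
theorem statement6_general
    {H : Type*} [NormedAddCommGroup H] [InnerProductSpace ℝ H] [CompleteSpace H]
    {m : ℕ}
    {G : Fin m → Type*} [∀ i, NormedAddCommGroup (G i)] [∀ i, InnerProductSpace ℝ (G i)]
    [∀ i, CompleteSpace (G i)]
    (z : H)
    (f : H → EReal) (hf : Gamma0 f)
    (hh : H → ℝ) (hhconv : ConvexOn ℝ Set.univ hh)
    (h' : H → H) (hh' : ∀ x, HasGradientAt hh (h' x) x)
    (r : ∀ i, G i)
    (g : ∀ i, G i → EReal) (hg : ∀ i, Gamma0 (g i))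
    (l : ∀ i, G i → EReal) (hl : ∀ i, Gamma0 (l i))
    (L : ∀ i, H →L[ℝ] G i)
    (lstar : ∀ i, G i → ℝ) (hlstar : ∀ i, ∀ v : G i, (lstar i v : EReal) = conj (l i) v)
    (lgrad : ∀ i, G i → G i) (hlgrad : ∀ i, ∀ v : G i, HasGradientAt (lstar i) (lgrad i v) v)
    -- the operators A and B on 𝒦 = ℋ ⊕ 𝒢₁ ⊕ ⋯ ⊕ 𝒢ₘ
    (A : (H × ∀ i, G i) → Set (H × ∀ i, G i))
    (hA : ∀ p q : H × ∀ i, G i, q ∈ A p ↔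
      (q.1 - ∑ i, ContinuousLinearMap.adjoint (L i) (p.2 i) + z ∈ subdiff f p.1) ∧
      ∀ i, q.2 i + L i p.1 - r i ∈ subdiff (conj (g i)) (p.2 i))
    (B : (H × ∀ i, G i) → H × ∀ i, G i)
    (hB : ∀ p : H × ∀ i, G i, B p = (h' p.1, fun i => lgrad i (p.2 i)))
    -- (x̄, v̄) ∈ zer(A + B)
    (xbar : H) (vbar : ∀ i, G i)
    (hzero : ∃ a ∈ A (xbar, vbar), a + B (xbar, vbar) = 0) :
    -- x̄ solves the primal problem …
    ((∀ x : H,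
        f xbar + (∑ i, infConv (g i) (l i) (L i xbar - r i))
            + ((hh xbar - ⟪xbar, z⟫ : ℝ) : EReal)
          ≤ f x + (∑ i, infConv (g i) (l i) (L i x - r i)) + ((hh x - ⟪x, z⟫ : ℝ) : EReal))) ∧
    -- … and (v̄₁,…,v̄ₘ) solves the dual problem
    (∀ v : ∀ i, G i,
      infConv (conj f) (conj fun x : H => ((hh x : ℝ) : EReal))
            (z - ∑ i, ContinuousLinearMap.adjoint (L i) (vbar i))
          + ∑ i, (conj (g i) (vbar i) + conj (l i) (vbar i) + ((⟪vbar i, r i⟫ : ℝ) : EReal))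
        ≤ infConv (conj f) (conj fun x : H => ((hh x : ℝ) : EReal))
            (z - ∑ i, ContinuousLinearMap.adjoint (L i) (v i))
          + ∑ i, (conj (g i) (v i) + conj (l i) (v i) + ((⟪v i, r i⟫ : ℝ) : EReal))) := by
  obtain ⟨a, haA, hab⟩ := hzero
  rw [hB] at hab
  obtain rfl : a = (-h' xbar, fun i => -lgrad i (vbar i)) := eq_neg_of_add_eq_zero_left hab
  obtain ⟨hfa, hga⟩ := (hA _ _).1 haA
  dsimp only at hfa hga
  set u₀ := z - h' xbar - ∑ i, ContinuousLinearMap.adjoint (L i) (vbar i)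
  have hu₀ : u₀ ∈ subdiff f xbar := by convert hfa using 1; simp only [u₀]; abel
  have hq : ∀ i, L i xbar - r i - lgrad i (vbar i) ∈ subdiff (conj (g i)) (vbar i) := fun i => by
    convert hga i using 1; abel
  have hp : ∀ i, lgrad i (vbar i) ∈ subdiff (conj (l i)) (vbar i) := fun i => by
    rw [show conj (l i) = fun v => (lstar i v : EReal) from funext fun v => (hlstar i v).symm]
    exact (convexOn_of_coe_eq_conj (hlstar i)).mem_subdiff_of_hasGradientAt (hlgrad i _)
  have hh_sub := hhconv.mem_subdiff_of_hasGradientAt (hh' xbar)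
  refine ⟨primal_le_of_mem_subdiff hu₀ hh_sub (fun i => ?_) (by simp only [u₀]; abel),
    dual_le_of_mem_subdiff
      (φ := fun i => conj (g i) + conj (l i) + fun w => ((⟪w, r i⟫ : ℝ) : EReal)) (x₀ := xbar)
      ?_ fun i => ?_⟩
  · simpa using mem_subdiff_infConv ((hg i).mem_subdiff_of_mem_subdiff_conj (hq i))
      ((hl i).mem_subdiff_of_mem_subdiff_conj (hp i))
  · obtain ⟨c, hc⟩ := exists_coe_eq_of_mem_subdiff hf.1 (hf.2.1 xbar) hu₀
    convert mem_subdiff_infConv (mem_subdiff_conj_of_mem_subdiff hu₀ hc)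
      (mem_subdiff_conj_of_mem_subdiff hh_sub rfl) using 2
    simp only [u₀]; abel
  · simpa using add_mem_subdiff_add (add_mem_subdiff_add (hq i) (hp i))
      (mem_subdiff_inner (vbar i) (r i))

/-- In the setting of Problem 2, if `(x̄, v̄₁,…,v̄ₘ) ∈ zer(A + B)` with
`A(x,v) = (∂f(x) − z + Σᵢ Lᵢ* vᵢ) × ∏ᵢ(−Lᵢ x + ∂gᵢ*(vᵢ) + rᵢ)` and
`B(x,v) = (∇h(x), ∇ℓ₁*(v₁), …, ∇ℓₘ*(vₘ))`, then `x̄` solves the primal problem and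
`(v̄₁,…,v̄ₘ)` solves the dual problem.  (`hh` is the function `h`, `h'` its gradient,
`lstar i` the — real-valued — conjugate `ℓᵢ*`, and `lgrad i` its gradient.) -/
theorem statement6
    {H : Type*} [NormedAddCommGroup H] [InnerProductSpace ℝ H] [CompleteSpace H]
    {m : ℕ} (hm : 0 < m)
    {G : Fin m → Type*} [∀ i, NormedAddCommGroup (G i)] [∀ i, InnerProductSpace ℝ (G i)]
    [∀ i, CompleteSpace (G i)]
    (z : H)
    (f : H → EReal) (hf : Gamma0 f)
    (hh : H → ℝ) (hhconv : ConvexOn ℝ Set.univ hh)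
    (h' : H → H) (hh' : ∀ x, HasGradientAt hh (h' x) x)
    (βh : ℝ) (hβh : 0 < βh) (hhlip : LipschitzWith βh.toNNReal h')
    (r : ∀ i, G i)
    (g : ∀ i, G i → EReal) (hg : ∀ i, Gamma0 (g i))
    (l : ∀ i, G i → EReal) (hl : ∀ i, Gamma0 (l i)) (hlsc : ∀ i, StronglyConvexE (l i))
    (L : ∀ i, H →L[ℝ] G i) (hL : ∀ i, L i ≠ 0)
    (lstar : ∀ i, G i → ℝ) (hlstar : ∀ i, ∀ v : G i, (lstar i v : EReal) = conj (l i) v)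
    (lgrad : ∀ i, G i → G i) (hlgrad : ∀ i, ∀ v : G i, HasGradientAt (lstar i) (lgrad i v) v)
    (ν : Fin m → ℝ) (hν : ∀ i, 0 < ν i) (hliplg : ∀ i, LipschitzWith (ν i).toNNReal (lgrad i))
    -- the qualification condition (10) of Problem 2 :
    -- z ∈ ran(∂f + Σᵢ Lᵢ*(∂gᵢ □ ∂ℓᵢ)(Lᵢ · − rᵢ) + ∇h)
    (hran : ∃ x : H, ∃ u ∈ subdiff f x, ∃ w : ∀ i, G i,
      (∀ i, ∃ a b : G i, L i x - r i = a + b ∧ w i ∈ subdiff (g i) a ∧ w i ∈ subdiff (l i) b) ∧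
      z = u + ∑ i, ContinuousLinearMap.adjoint (L i) (w i) + h' x)
    -- the operators A and B on 𝒦 = ℋ ⊕ 𝒢₁ ⊕ ⋯ ⊕ 𝒢ₘ
    (A : (H × ∀ i, G i) → Set (H × ∀ i, G i))
    (hA : ∀ p q : H × ∀ i, G i, q ∈ A p ↔
      (q.1 - ∑ i, ContinuousLinearMap.adjoint (L i) (p.2 i) + z ∈ subdiff f p.1) ∧
      ∀ i, q.2 i + L i p.1 - r i ∈ subdiff (conj (g i)) (p.2 i))
    (B : (H × ∀ i, G i) → H × ∀ i, G i)
    (hB : ∀ p : H × ∀ i, G i, B p = (h' p.1, fun i => lgrad i (p.2 i)))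
    -- (x̄, v̄) ∈ zer(A + B)
    (xbar : H) (vbar : ∀ i, G i)
    (hzero : ∃ a ∈ A (xbar, vbar), a + B (xbar, vbar) = 0) :
    -- x̄ solves the primal problem …
    ((∀ x : H,
        f xbar + (∑ i, infConv (g i) (l i) (L i xbar - r i))
            + ((hh xbar - ⟪xbar, z⟫ : ℝ) : EReal)
          ≤ f x + (∑ i, infConv (g i) (l i) (L i x - r i)) + ((hh x - ⟪x, z⟫ : ℝ) : EReal))) ∧
    -- … and (v̄₁,…,v̄ₘ) solves the dual problem
    (∀ v : ∀ i, G i,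
      infConv (conj f) (conj fun x : H => ((hh x : ℝ) : EReal))
            (z - ∑ i, ContinuousLinearMap.adjoint (L i) (vbar i))
          + ∑ i, (conj (g i) (vbar i) + conj (l i) (vbar i) + ((⟪vbar i, r i⟫ : ℝ) : EReal))
        ≤ infConv (conj f) (conj fun x : H => ((hh x : ℝ) : EReal))
            (z - ∑ i, ContinuousLinearMap.adjoint (L i) (v i))
          + ∑ i, (conj (g i) (v i) + conj (l i) (v i) + ((⟪v i, r i⟫ : ℝ) : EReal))) :=
  statement6_general z f hf hh hhconv h' hh' r g hg l hl L lstar hlstar lgrad hlgrad A hA B hB xbar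
    vbar hzero
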